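/- arXiv:1607.03024 — 3 statements merged into one kernel-verified Lean document; each statement's English description precedes it below -/
import Mathlib

section
/- Fix β > 0 and ρ > ρ_c(β) := sup_{μ<0} I(β,μ), where I(β,μ) = (2π)^{-3} ∫_{ℝ³}(e^{β(|k|²-μ)}-1)^{-1} dk. For each η ≠ 0 the equation ρ = I(β,μ) + |η|²/μ² has a unique solution μ(β,ρ,η) < 0, and as η → 0 one has μ(β,ρ,η) → 0 and |η|²/μ(β,ρ,η)² → ρ - ρ_c(β). -/
open Filter Topology Set

/-! `F(μ) = I(μ) + c/μ²` (with `c = |η|² > 0`) is continuous and strictly increasing on `(-∞, 0)`,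
tends to `0` at `-∞` and to `+∞` at `0⁻`, so it takes every value `ρ > 0` exactly once.
As `η → 0`, `c/μ² = ρ - I(μ) ≥ ρ - ρ_c > 0` forces `μ² ≤ c/(ρ - ρ_c) → 0`, and then
`c/μ² = ρ - I(μ) → ρ - ρ_c`. -/

section MonotoneBounds

variable {β : Type*} [Preorder β] [TopologicalSpace β] [OrderClosedTopology β]
  {f : ℝ → β} {a x : ℝ} {L : β}

theorem MonotoneOn.le_of_tendsto_nhdsLT (hf : MonotoneOn f (Iio a))
    (h : Tendsto f (𝓝[<] a) (𝓝 L)) (hx : x < a) : f x ≤ L :=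
  ge_of_tendsto h <| mem_of_superset (Ioo_mem_nhdsLT hx) fun _ hy => hf hx hy.2 hy.1.le

theorem MonotoneOn.ge_of_tendsto_atBot (hf : MonotoneOn f (Iio a))
    (h : Tendsto f atBot (𝓝 L)) (hx : x < a) : L ≤ f x :=
  le_of_tendsto h <| (eventually_le_atBot x).mono fun _ hy => hf (lt_of_le_of_lt hy hx) hx hy

end MonotoneBounds

theorem strictMonoOn_const_div_sq {c : ℝ} (hc : 0 < c) :
    StrictMonoOn (fun μ : ℝ => c / μ ^ 2) (Iio 0) := fun x (hx : x < 0) y (hy : y < 0) hxy =>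
  div_lt_div_of_pos_left hc (by nlinarith) (by nlinarith)

theorem tendsto_const_div_sq_atBot (c : ℝ) :
    Tendsto (fun μ : ℝ => c / μ ^ 2) atBot (𝓝 0) := by
  simpa [div_eq_mul_inv, inv_pow] using
    (tendsto_inv_atBot_zero (𝕜 := ℝ)).pow 2 |>.const_mul c

theorem tendsto_const_div_sq_nhdsLT_zero {c : ℝ} (hc : 0 < c) :
    Tendsto (fun μ : ℝ => c / μ ^ 2) (𝓝[<] 0) atTop := by
  simpa [div_eq_mul_inv, sq] using
    (tendsto_inv_nhdsLT_zero.atBot_mul_atBot₀ tendsto_inv_nhdsLT_zero).const_mul_atTop hc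

section CondensateEquation

variable {I : ℝ → ℝ} {ρc ρ c : ℝ}

theorem surjOn_add_const_div_sq (hIc : ContinuousOn I (Iio 0))
    (hI0 : Tendsto I (𝓝[<] 0) (𝓝 ρc)) (hIbot : Tendsto I atBot (𝓝 0)) (hc : 0 < c) :
    SurjOn (fun μ => I μ + c / μ ^ 2) (Iio 0) (Ioi 0) := by
  have hcont : ContinuousOn (fun μ => I μ + c / μ ^ 2) (Iio 0) :=
    hIc.add <| continuousOn_const.div (continuousOn_pow 2) fun _ hμ => pow_ne_zero 2 hμ.ne
  have hbot : Tendsto (fun μ => I μ + c / μ ^ 2) atBot (𝓝 0) := by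
    simpa using hIbot.add (tendsto_const_div_sq_atBot c)
  have htop : Tendsto (fun μ => I μ + c / μ ^ 2) (𝓝[<] 0) atTop :=
    hI0.add_atTop (tendsto_const_div_sq_nhdsLT_zero hc)
  exact isPreconnected_Iio.intermediate_value_Ioi (l₂ := 𝓝[<] 0)
    (le_principal_iff.2 (Iio_mem_atBot 0)) inf_le_right hcont hbot htop

theorem existsUnique_eq_add_const_div_sq (hIc : ContinuousOn I (Iio 0))
    (hImono : StrictMonoOn I (Iio 0)) (hI0 : Tendsto I (𝓝[<] 0) (𝓝 ρc))
    (hIbot : Tendsto I atBot (𝓝 0)) (hc : 0 < c) (hρ : 0 < ρ) :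
    ∃! μ : ℝ, μ < 0 ∧ ρ = I μ + c / μ ^ 2 := by
  obtain ⟨μ, hμ, hμρ⟩ := surjOn_add_const_div_sq hIc hI0 hIbot hc hρ
  refine ⟨μ, ⟨hμ, hμρ.symm⟩, fun ν ⟨hν, hνρ⟩ => ?_⟩
  exact (hImono.add (strictMonoOn_const_div_sq hc)).injOn hν hμ (hνρ.symm.trans hμρ.symm)

variable {α : Type*} {l : Filter α} {μ g : α → ℝ}

theorem tendsto_zero_of_eq_add_div_sq (hIle : ∀ x < 0, I x ≤ ρc) (hρ : ρc < ρ)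
    (hg : Tendsto g l (𝓝 0)) (hμ : ∀ᶠ x in l, μ x < 0 ∧ ρ = I (μ x) + g x / μ x ^ 2) :
    Tendsto μ l (𝓝 0) := by
  have hsq_le : ∀ᶠ x in l, μ x ^ 2 ≤ g x / (ρ - ρc) := hμ.mono fun x ⟨hx, hxρ⟩ => by
    have hpos : 0 < μ x ^ 2 := by nlinarith
    have hdiv : ρ - ρc ≤ g x / μ x ^ 2 := by linarith [hIle _ hx]
    rw [le_div_iff₀ (by linarith), mul_comm]
    exact (le_div_iff₀ hpos).1 hdiv
  have hsq : Tendsto (fun x => μ x ^ 2) l (𝓝 0) :=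
    tendsto_of_tendsto_of_tendsto_of_le_of_le' tendsto_const_nhds
      (by simpa using hg.div_const (ρ - ρc)) (.of_forall fun x => sq_nonneg (μ x)) hsq_le
  have habs : Tendsto (fun x => |μ x|) l (𝓝 0) := by
    simpa [Real.sqrt_sq_eq_abs] using hsq.sqrt
  exact tendsto_zero_iff_abs_tendsto_zero μ |>.2 habs

theorem tendsto_div_sq_of_eq_add_div_sq (hI0 : Tendsto I (𝓝[<] 0) (𝓝 ρc))
    (hμ0 : Tendsto μ l (𝓝 0)) (hμ : ∀ᶠ x in l, μ x < 0 ∧ ρ = I (μ x) + g x / μ x ^ 2) :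
    Tendsto (fun x => g x / μ x ^ 2) l (𝓝 (ρ - ρc)) := by
  have hμ0' : Tendsto μ l (𝓝[<] 0) :=
    tendsto_nhdsWithin_iff.2 ⟨hμ0, hμ.mono fun _ h => h.1⟩
  refine (tendsto_const_nhds.sub (hI0.comp hμ0')).congr' ?_
  filter_upwards [hμ] with x hx
  simp only [Function.comp_apply]
  linarith [hx.2]

end CondensateEquation

theorem condensate_equation_supercritical_general
    (ρ ρc : ℝ) (I : ℝ → ℝ)
    (hIc : ContinuousOn I (Set.Iio 0)) (hImono : StrictMonoOn I (Set.Iio 0))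
    (hI0 : Tendsto I (𝓝[<] 0) (𝓝 ρc)) (hIbot : Tendsto I atBot (𝓝 0))
    (hρ : ρc < ρ) :
    (∀ η : ℂ, η ≠ 0 → ∃! μ : ℝ, μ < 0 ∧ ρ = I μ + ‖η‖ ^ 2 / μ ^ 2) ∧
    ∀ μsol : ℂ → ℝ,
      (∀ η : ℂ, η ≠ 0 → μsol η < 0 ∧ ρ = I (μsol η) + ‖η‖ ^ 2 / (μsol η) ^ 2) →
      Tendsto μsol (𝓝[≠] (0:ℂ)) (𝓝 0) ∧
      Tendsto (fun η => ‖η‖ ^ 2 / (μsol η) ^ 2) (𝓝[≠] (0:ℂ)) (𝓝 (ρ - ρc)) := by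
  have hIle : ∀ x < 0, I x ≤ ρc := fun _ hx => hImono.monotoneOn.le_of_tendsto_nhdsLT hI0 hx
  have hρc : 0 ≤ ρc :=
    (hImono.monotoneOn.ge_of_tendsto_atBot hIbot neg_one_lt_zero).trans (hIle _ neg_one_lt_zero)
  refine ⟨fun η hη => existsUnique_eq_add_const_div_sq hIc hImono hI0 hIbot
    (by positivity) (by linarith), fun μsol hμsol => ?_⟩
  have hsol : ∀ᶠ η in 𝓝[≠] (0 : ℂ),
      μsol η < 0 ∧ ρ = I (μsol η) + ‖η‖ ^ 2 / μsol η ^ 2 :=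
    eventually_nhdsWithin_of_forall hμsol
  have hnorm : Tendsto (fun η : ℂ => ‖η‖ ^ 2) (𝓝[≠] 0) (𝓝 0) := by
    simpa using (tendsto_norm_zero.pow 2).mono_left nhdsWithin_le_nhds
  have hμ0 := tendsto_zero_of_eq_add_div_sq hIle hρ hnorm hsol
  exact ⟨hμ0, tendsto_div_sq_of_eq_add_div_sq hI0 hμ0 hsol⟩

/-- Condensate equation with symmetry-breaking source: for `ρ > ρ_c` and each
`η ≠ 0` the equation `ρ = I(μ) + |η|²/μ²` has a unique negative solution, and
as `η → 0` the solution tends to `0` while `|η|²/μ² → ρ - ρ_c`. -/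
theorem condensate_equation_supercritical
    (β ρ ρc : ℝ) (I : ℝ → ℝ)
    (hIc : ContinuousOn I (Set.Iio 0)) (hImono : StrictMonoOn I (Set.Iio 0))
    (hI0 : Tendsto I (𝓝[<] 0) (𝓝 ρc)) (hIbot : Tendsto I atBot (𝓝 0))
    (hρ : ρc < ρ) :
    (∀ η : ℂ, η ≠ 0 → ∃! μ : ℝ, μ < 0 ∧ ρ = I μ + ‖η‖ ^ 2 / μ ^ 2) ∧
    ∀ μsol : ℂ → ℝ,
      (∀ η : ℂ, η ≠ 0 → μsol η < 0 ∧ ρ = I (μsol η) + ‖η‖ ^ 2 / (μsol η) ^ 2) →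
      Tendsto μsol (𝓝[≠] (0:ℂ)) (𝓝 0) ∧
      Tendsto (fun η => ‖η‖ ^ 2 / (μsol η) ^ 2) (𝓝[≠] (0:ℂ)) (𝓝 (ρ - ρc)) :=
  condensate_equation_supercritical_general ρ ρc I hIc hImono hI0 hIbot hρ
end

section
/- With μ(β,ρ,η) the unique negative solution of ρ = I(β,μ) + |η|²/μ², the 'gauge symmetry breaking' quasi-average limit holds: if η = |η|e^{iφ} with φ fixed and |η| → 0⁺, then η/μ(β,ρ,η) → -e^{iφ}√(ρ - ρ_c(β)) up to sign; in particular |η/μ(β,ρ,η)| → √(ρ - ρ_c(β)) whenever ρ > ρ_c(β). -/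
/-!
Since `I` increases strictly to `ρ_c` on `(-∞, 0)`, the equation `ρ = I(μ) + |η|²/μ²` gives
`|η|/|μ| = √(ρ - I(μ)) > √(ρ - ρ_c)`, so `|μ| < |η|/√(ρ - ρ_c)` forces `μ(η) → 0⁻` as `η → 0`.
Then `I(μ(η)) → ρ_c` and `|η|/|μ(η)| → √(ρ - ρ_c)`. On the ray `η = t e^{iφ}` the phase of
`η/μ(η)` is that of `-e^{iφ}` because `t > 0 > μ`.
-/

open Filter Topology

theorem StrictMonoOn.lt_of_tendsto_nhdsLT {α β : Type*} [LinearOrder α] [TopologicalSpace α]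
    [OrderTopology α] [DenselyOrdered α] [Preorder β] [TopologicalSpace β] [ClosedIciTopology β]
    {f : α → β} {a x : α} {L : β} (hf : StrictMonoOn f (Set.Iio a))
    (hL : Tendsto f (𝓝[<] a) (𝓝 L)) (hx : x < a) : f x < L := by
  obtain ⟨y, hxy, hya⟩ := exists_between hx
  have : NeBot (𝓝[<] a) := nhdsLT_neBot_of_exists_lt ⟨x, hx⟩
  have hyL : f y ≤ L := ge_of_tendsto hL <| by
    filter_upwards [Ioo_mem_nhdsLT hya] with z hz
    exact (hf hya hz.2 hz.1).le
  exact (hf hx hya hxy).trans_le hyL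

theorem div_abs_eq_sqrt_of_eq_add_sq_div_sq {x μ c ρ : ℝ} (hx : 0 ≤ x)
    (h : ρ = c + x ^ 2 / μ ^ 2) : x / |μ| = √(ρ - c) := by
  rw [← Real.sqrt_sq (by positivity : 0 ≤ x / |μ|), div_pow, sq_abs]
  congr 1
  linarith

section Solution

variable {E : Type*} [NormedAddCommGroup E] {ρ ρc : ℝ} {I : ℝ → ℝ} {μsol : E → ℝ}

theorem tendsto_solution_nhdsLT_zero (hρ : ρc < ρ) (hIlt : ∀ μ < 0, I μ < ρc)
    (hsol : ∀ η : E, η ≠ 0 → μsol η < 0 ∧ ρ = I (μsol η) + ‖η‖ ^ 2 / μsol η ^ 2) :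
    Tendsto μsol (𝓝[≠] 0) (𝓝[<] 0) := by
  have hgap : 0 < √(ρ - ρc) := Real.sqrt_pos.mpr (sub_pos.mpr hρ)
  have hbound : ∀ η : E, η ≠ 0 → |μsol η| ≤ ‖η‖ / √(ρ - ρc) := by
    intro η hη
    obtain ⟨hneg, heq⟩ := hsol η hη
    have hratio : √(ρ - ρc) ≤ ‖η‖ / |μsol η| := by
      rw [div_abs_eq_sqrt_of_eq_add_sq_div_sq (norm_nonneg η) heq]
      exact Real.sqrt_le_sqrt (by linarith [hIlt _ hneg])
    rw [le_div_iff₀ hgap]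
    rwa [le_div_iff₀ (abs_pos.mpr hneg.ne), mul_comm] at hratio
  refine tendsto_nhdsWithin_of_tendsto_nhds_of_eventually_within _ ?_ ?_
  · have hlim : Tendsto (fun η : E => ‖η‖ / √(ρ - ρc)) (𝓝[≠] 0) (𝓝 0) := by
      simpa using (tendsto_norm_zero.mono_left nhdsWithin_le_nhds).div_const √(ρ - ρc)
    refine squeeze_zero_norm' ?_ hlim
    filter_upwards [self_mem_nhdsWithin] with η hη
    exact hbound η hη
  · filter_upwards [self_mem_nhdsWithin] with η hη
    exact (hsol η hη).1

theorem tendsto_norm_div_abs_solution (hρ : ρc < ρ) (hImono : StrictMonoOn I (Set.Iio 0))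
    (hI0 : Tendsto I (𝓝[<] 0) (𝓝 ρc))
    (hsol : ∀ η : E, η ≠ 0 → μsol η < 0 ∧ ρ = I (μsol η) + ‖η‖ ^ 2 / μsol η ^ 2) :
    Tendsto (fun η => ‖η‖ / |μsol η|) (𝓝[≠] 0) (𝓝 √(ρ - ρc)) := by
  have hIlt : ∀ μ < 0, I μ < ρc := fun μ hμ => hImono.lt_of_tendsto_nhdsLT hI0 hμ
  have hIsol : Tendsto (fun η => I (μsol η)) (𝓝[≠] 0) (𝓝 ρc) :=
    hI0.comp (tendsto_solution_nhdsLT_zero hρ hIlt hsol)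
  refine ((Real.continuous_sqrt.tendsto _).comp (tendsto_const_nhds.sub hIsol)).congr' ?_
  filter_upwards [self_mem_nhdsWithin] with η hη
  exact (div_abs_eq_sqrt_of_eq_add_sq_div_sq (norm_nonneg η) (hsol η hη).2).symm

end Solution

theorem tendsto_ofReal_mul_nhdsNE_zero {e : ℂ} (he : e ≠ 0) :
    Tendsto (fun t : ℝ => (t : ℂ) * e) (𝓝[>] 0) (𝓝[≠] 0) := by
  refine tendsto_nhdsWithin_of_tendsto_nhds_of_eventually_within _ ?_ ?_
  · simpa using ((Complex.continuous_ofReal.tendsto 0).mul_const e).mono_left nhdsWithin_le_nhds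
  · filter_upwards [self_mem_nhdsWithin] with t (ht : 0 < t)
    exact mul_ne_zero (Complex.ofReal_ne_zero.mpr ht.ne') he

theorem ofReal_mul_div_ofReal_eq_neg_norm_div_abs_mul {e : ℂ} (he : ‖e‖ = 1) {t μ : ℝ} (ht : 0 < t)
    (hμ : μ < 0) : (t : ℂ) * e / μ = -((‖(t : ℂ) * e‖ / |μ| : ℝ) : ℂ) * e := by
  rw [norm_mul, he, mul_one, Complex.norm_real, Real.norm_of_nonneg ht.le, abs_of_neg hμ]
  push_cast
  ring

theorem gauge_symmetry_breaking_quasi_average_general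
    (ρ ρc : ℝ) (I : ℝ → ℝ)
    (hImono : StrictMonoOn I (Set.Iio 0))
    (hI0 : Tendsto I (𝓝[<] 0) (𝓝 ρc))
    (hρ : ρc < ρ) (φ : ℝ) (μsol : ℂ → ℝ)
    (hsol : ∀ η : ℂ, η ≠ 0 → μsol η < 0 ∧ ρ = I (μsol η) + ‖η‖ ^ 2 / (μsol η) ^ 2) :
    Tendsto (fun t : ℝ =>
        ((t : ℂ) * Complex.exp (Complex.I * (φ:ℂ))) /
          ((μsol ((t : ℂ) * Complex.exp (Complex.I * (φ:ℂ))) : ℝ) : ℂ))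
      (𝓝[>] (0:ℝ))
      (𝓝 (-(Real.sqrt (ρ - ρc) : ℂ) * Complex.exp (Complex.I * (φ:ℂ)))) ∧
    Tendsto (fun η : ℂ => ‖η‖ / |μsol η|) (𝓝[≠] (0:ℂ)) (𝓝 (Real.sqrt (ρ - ρc))) := by
  have hratio := tendsto_norm_div_abs_solution hρ hImono hI0 hsol
  refine ⟨?_, hratio⟩
  set e := Complex.exp (Complex.I * φ)
  have he : ‖e‖ = 1 := Complex.norm_exp_I_mul_ofReal φ
  have he0 : e ≠ 0 := Complex.exp_ne_zero _
  have hray := hratio.comp (tendsto_ofReal_mul_nhdsNE_zero he0)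
  refine (((Complex.continuous_ofReal.tendsto _).comp hray).neg.mul_const e).congr' ?_
  filter_upwards [self_mem_nhdsWithin] with t (ht : 0 < t)
  have hne : (t : ℂ) * e ≠ 0 := mul_ne_zero (Complex.ofReal_ne_zero.mpr ht.ne') he0
  exact (ofReal_mul_div_ofReal_eq_neg_norm_div_abs_mul he ht (hsol _ hne).1).symm

/-- Gauge symmetry breaking via quasi-averages: with `μ(η)` the unique negative
solution of `ρ = I(μ) + |η|²/μ²`, along the ray `η = t e^{iφ}`, `t → 0⁺`, one has
`η/μ(η) → -e^{iφ}√(ρ-ρ_c)`; in particular `|η/μ(η)| → √(ρ-ρ_c)`. -/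
theorem gauge_symmetry_breaking_quasi_average
    (β ρ ρc : ℝ) (I : ℝ → ℝ)
    (hIc : ContinuousOn I (Set.Iio 0)) (hImono : StrictMonoOn I (Set.Iio 0))
    (hI0 : Tendsto I (𝓝[<] 0) (𝓝 ρc)) (hIbot : Tendsto I atBot (𝓝 0))
    (hρ : ρc < ρ) (φ : ℝ) (μsol : ℂ → ℝ)
    (hsol : ∀ η : ℂ, η ≠ 0 → μsol η < 0 ∧ ρ = I (μsol η) + ‖η‖ ^ 2 / (μsol η) ^ 2) :
    Tendsto (fun t : ℝ =>
        ((t : ℂ) * Complex.exp (Complex.I * (φ:ℂ))) /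
          ((μsol ((t : ℂ) * Complex.exp (Complex.I * (φ:ℂ))) : ℝ) : ℂ))
      (𝓝[>] (0:ℝ))
      (𝓝 (-(Real.sqrt (ρ - ρc) : ℂ) * Complex.exp (Complex.I * (φ:ℂ)))) ∧
    Tendsto (fun η : ℂ => ‖η‖ / |μsol η|) (𝓝[≠] (0:ℂ)) (𝓝 (Real.sqrt (ρ - ρc))) :=
  gauge_symmetry_breaking_quasi_average_general ρ ρc I hImono hI0 hρ φ μsol hsol
end

section
/- If ρ ≤ ρ_c(β), the solutions μ(β,ρ,η) of the condensate equation ρ = I(β,μ) + |η|²/μ² satisfy lim_{η→0} μ(β,ρ,η) = μ₀(β,ρ) < 0 when ρ < ρ_c(β), where μ₀ is the unique solution of ρ = I(β,μ); consequently |η|²/μ(β,ρ,η)² → 0, i.e. there is no condensate in the subcritical regime. -/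
open Filter Topology

/-- Subcritical regime: for `ρ < ρ_c` the solutions `μ(η)` of
`ρ = I(μ) + |η|²/μ²` converge as `η → 0` to the unique `μ₀ < 0` with
`I(μ₀) = ρ`, and the condensate term `|η|²/μ(η)²` vanishes. -/
theorem condensate_equation_subcritical
    (β ρ ρc : ℝ) (I : ℝ → ℝ)
    (hIc : ContinuousOn I (Set.Iio 0)) (hImono : StrictMonoOn I (Set.Iio 0))
    (hI0 : Tendsto I (𝓝[<] 0) (𝓝 ρc)) (hIbot : Tendsto I atBot (𝓝 0))
    (hρpos : 0 < ρ) (hρ : ρ < ρc)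
    (μ₀ : ℝ) (hμ₀neg : μ₀ < 0) (hμ₀ : I μ₀ = ρ)
    (μsol : ℂ → ℝ)
    (hsol : ∀ η : ℂ, η ≠ 0 → μsol η < 0 ∧ ρ = I (μsol η) + ‖η‖ ^ 2 / (μsol η) ^ 2) :
    Tendsto μsol (𝓝[≠] (0:ℂ)) (𝓝 μ₀) ∧
    Tendsto (fun η : ℂ => ‖η‖ ^ 2 / (μsol η) ^ 2) (𝓝[≠] (0:ℂ)) (𝓝 0) := by
  -- For every η ≠ 0, μsol η < μ₀.
  have hlt : ∀ η : ℂ, η ≠ 0 → μsol η < μ₀ := by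
    intro η hη
    obtain ⟨hneg, heq⟩ := hsol η hη
    have hμne : μsol η ≠ 0 := ne_of_lt hneg
    have hμsq : (0:ℝ) < (μsol η) ^ 2 := by positivity
    have hηpos : (0:ℝ) < ‖η‖ ^ 2 / (μsol η) ^ 2 := by
      apply div_pos _ hμsq
      have : ‖η‖ ≠ 0 := by simpa using hη
      positivity
    have hIlt : I (μsol η) < I μ₀ := by
      rw [hμ₀]; linarith
    by_contra h
    push_neg at h
    rcases eq_or_lt_of_le h with h' | h'
    · rw [h'] at hIlt; exact lt_irrefl _ hIlt
    · exact absurd (hImono hμ₀neg hneg h') (not_lt.2 hIlt.le)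
  -- For every ε > 0, eventually μ₀ - ε < μsol η.
  have hmain : Tendsto μsol (𝓝[≠] (0:ℂ)) (𝓝 μ₀) := by
    rw [Metric.tendsto_nhdsWithin_nhds]
    intro ε hε
    set a := μ₀ - ε with ha
    have haneg : a < 0 := by linarith
    have haltμ₀ : a < μ₀ := by linarith
    have hIa : I a < ρ := by rw [← hμ₀]; exact hImono haneg hμ₀neg haltμ₀
    set c := ρ - I a with hc
    have hcpos : (0:ℝ) < c := by linarith
    have hane : a ≠ 0 := ne_of_lt haneg
    refine ⟨|a| * Real.sqrt c, by positivity, ?_⟩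
    intro η hη hdist
    have hηne : η ≠ 0 := hη
    obtain ⟨hneg, heq⟩ := hsol η hηne
    have hμne : μsol η ≠ 0 := ne_of_lt hneg
    have hμsq : (0:ℝ) < (μsol η) ^ 2 := by positivity
    have hηnorm : ‖η‖ < |a| * Real.sqrt c := by
      simpa [dist_eq_norm] using hdist
    -- Show a < μsol η.
    have hag : a < μsol η := by
      by_contra h
      push_neg at h
      have hIle : I (μsol η) ≤ I a := by
        rcases eq_or_lt_of_le h with h' | h'
        · rw [h']
        · exact (hImono hneg haneg h').le
      have h1 : c ≤ ‖η‖ ^ 2 / (μsol η) ^ 2 := by linarith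
      have hsq : a ^ 2 ≤ (μsol η) ^ 2 := by nlinarith
      have h2 : c * a ^ 2 ≤ ‖η‖ ^ 2 := by
        calc c * a ^ 2 ≤ (‖η‖ ^ 2 / (μsol η) ^ 2) * (μsol η) ^ 2 := by
              apply mul_le_mul h1 hsq (by positivity)
              positivity
          _ = ‖η‖ ^ 2 := by field_simp
      have h3 : ‖η‖ ^ 2 < (|a| * Real.sqrt c) ^ 2 := by
        apply sq_lt_sq' _ hηnorm
        have : (0:ℝ) ≤ ‖η‖ := norm_nonneg _
        linarith
      have h4 : (|a| * Real.sqrt c) ^ 2 = c * a ^ 2 := by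
        rw [mul_pow, sq_abs, Real.sq_sqrt hcpos.le]; ring
      linarith
    have := hlt η hηne
    rw [Real.dist_eq]
    rw [abs_lt]
    constructor <;> [linarith; linarith]
  refine ⟨hmain, ?_⟩
  -- μsol η ∈ Iio 0 eventually, tendsto within.
  have hmem : ∀ η : ℂ, η ∈ ({0}ᶜ : Set ℂ) → μsol η ∈ Set.Iio 0 := by
    intro η hη; exact (hsol η hη).1
  have htend' : Tendsto μsol (𝓝[≠] (0:ℂ)) (𝓝[Set.Iio 0] μ₀) := by
    apply tendsto_nhdsWithin_of_tendsto_nhds_of_eventually_within _ hmain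
    exact eventually_nhdsWithin_of_forall hmem
  have hIcomp : Tendsto (fun η => I (μsol η)) (𝓝[≠] (0:ℂ)) (𝓝 ρ) := by
    have := (hIc μ₀ hμ₀neg).tendsto.comp htend'
    rwa [hμ₀] at this
  have : Tendsto (fun η : ℂ => ρ - I (μsol η)) (𝓝[≠] (0:ℂ)) (𝓝 (ρ - ρ)) :=
    tendsto_const_nhds.sub hIcomp
  rw [sub_self] at this
  apply this.congr'
  filter_upwards [self_mem_nhdsWithin] with η hη
  have := (hsol η hη).2
  linarith
end
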